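/- arXiv:2007.14508 — 3 statements merged into one kernel-verified Lean document; each statement's English description precedes it below -/
import Mathlib

section
/- Let W_0 be a graphon and Ω = {(x,y) ∈ [0,1]^2 : 0 < W_0(x,y) < 1}. (a) If f is a graphon such that the set {(x,y) ∈ Ω^c : f(x,y) ≠ W_0(x,y)} has positive Lebesgue measure, then I_{W_0}(f) = ∞. (b) If f ∈ W_Ω and β := inf{w > 0 : w lies in the image of W_0 or 1−w lies in the image of W_0} > 0, then I_{W_0}(f) ≤ (1/2)·log(2/β). -/
open MeasureTheory Set Filter
open scoped ENNReal NNReal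

noncomputable section

namespace GraphonLDP

/-- The unit square `[0,1]² ⊆ ℝ²`. -/
def unitSq : Set (ℝ × ℝ) := Set.Icc (0:ℝ) 1 ×ˢ Set.Icc (0:ℝ) 1

/-- A graphon: a measurable, symmetric function with values in `[0,1]`. -/
def IsGraphon (f : ℝ → ℝ → ℝ) : Prop :=
  Measurable (Function.uncurry f) ∧ (∀ x y, f x y ∈ Set.Icc (0:ℝ) 1) ∧ ∀ x y, f x y = f y x

open Classical in
/-- The pointwise relative entropy `h_p(u)`, valued in `[0,∞]`
(with `h_0(0) = h_1(1) = 0`, `h_0(u) = ∞` for `u ≠ 0`, `h_1(u) = ∞` for `u ≠ 1`,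
and the convention `0 log 0 = 0`, which is automatic since `Real.log 0 = 0`). -/
def relEnt (p u : ℝ) : ℝ≥0∞ :=
  if p = 0 then (if u = 0 then 0 else ⊤)
  else if p = 1 then (if u = 1 then 0 else ⊤)
  else ENNReal.ofReal (u * Real.log (u / p) + (1 - u) * Real.log ((1 - u) / (1 - p)))

/-- The relative entropy functional `I_{W₀}(f)`, valued in `[0,∞]`. -/
def Ient (W₀ f : ℝ → ℝ → ℝ) : ℝ≥0∞ :=
  (1 / 2) * ∫⁻ q in unitSq, relEnt (W₀ q.1 q.2) (f q.1 q.2)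

/-- `Ω = {(x,y) ∈ [0,1]² : 0 < W₀(x,y) < 1}`. -/
def OmegaSet (W₀ : ℝ → ℝ → ℝ) : Set (ℝ × ℝ) :=
  {q | q ∈ unitSq ∧ W₀ q.1 q.2 ∈ Set.Ioo (0:ℝ) 1}

/-- `f ∈ W_Ω`: `f` is a graphon agreeing with `W₀` a.e. on `[0,1]² \ Ω`. -/
def MemWOmega (W₀ f : ℝ → ℝ → ℝ) : Prop :=
  IsGraphon f ∧
    ∀ᵐ q ∂(volume.restrict (unitSq \ OmegaSet W₀)), f q.1 q.2 = W₀ q.1 q.2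

/-- The cut distance `d_□(f,g)`. -/
def cutDist (f g : ℝ → ℝ → ℝ) : ℝ :=
  ⨆ p : {S : Set ℝ // MeasurableSet S ∧ S ⊆ Set.Icc (0:ℝ) 1} ×
        {T : Set ℝ // MeasurableSet T ∧ T ⊆ Set.Icc (0:ℝ) 1},
    |∫ q in ((p.1 : Set ℝ) ×ˢ (p.2 : Set ℝ)), (f q.1 q.2 - g q.1 q.2)|

/-- The set of values of `W₀` on the unit square. -/
def imageVals (W₀ : ℝ → ℝ → ℝ) : Set ℝ := {w : ℝ | ∃ q ∈ unitSq, W₀ q.1 q.2 = w}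

/-- Real-valued relative entropy `h_p(u)` for `p ∈ (0,1)`. -/
def hRel (p u : ℝ) : ℝ :=
  u * Real.log (u / p) + (1 - u) * Real.log ((1 - u) / (1 - p))

/-- `ψ_p(x) = h_p(x^{1/d})`. -/
def psi (d : ℕ) (p : ℝ) : ℝ → ℝ := fun x => hRel p (x ^ ((d : ℝ)⁻¹))

/-- The convex minorant on `[0,1]`: pointwise supremum of affine minorants. -/
def convexMinorant (F : ℝ → ℝ) (x : ℝ) : ℝ :=
  sSup {y : ℝ | ∃ a b : ℝ, (∀ z ∈ Set.Icc (0:ℝ) 1, a * z + b ≤ F z) ∧ y = a * x + b}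

/-- `A⁺_ε(f,c) = {(x,y) ∈ [0,1]² : f(x,y) − c ≥ ε}`. -/
def Aplus (f : ℝ → ℝ → ℝ) (c ε : ℝ) : Set (ℝ × ℝ) :=
  {q | q ∈ unitSq ∧ ε ≤ f q.1 q.2 - c}

/-- `A⁻_ε(f,c) = {(x,y) ∈ [0,1]² : c − f(x,y) ≥ ε}`. -/
def Aminus (f : ℝ → ℝ → ℝ) (c ε : ℝ) : Set (ℝ × ℝ) :=
  {q | q ∈ unitSq ∧ ε ≤ c - f q.1 q.2}

/-- Partial sums `γ_1 + ⋯ + γ_n`. -/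
def cumSum {m : ℕ} (γ : Fin m → ℝ) (n : ℕ) : ℝ :=
  ∑ i : Fin m, if (i : ℕ) < n then γ i else 0

/-- The interval `I_j` of the block structure: `I_1 = [0,γ_1]`,
`I_j = (γ_1+⋯+γ_{j-1}, γ_1+⋯+γ_j]` for `j ≥ 2`. -/
def blockI {m : ℕ} (γ : Fin m → ℝ) (j : Fin m) : Set ℝ :=
  if (j : ℕ) = 0 then Set.Icc 0 (cumSum γ 1)
  else Set.Ioc (cumSum γ (j : ℕ)) (cumSum γ ((j : ℕ) + 1))

/-- `γ` is a vector of positive block widths summing to `1`. -/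
def GoodWidths {m : ℕ} (γ : Fin m → ℝ) : Prop :=
  (∀ i, 0 < γ i) ∧ ∑ i, γ i = 1

/-- `f` is the block graphon in `B^γ` with matrix `P`. -/
def IsBlockGraphon {m : ℕ} (γ : Fin m → ℝ) (P : Fin m → Fin m → ℝ) (f : ℝ → ℝ → ℝ) : Prop :=
  (∀ i j, P i j ∈ Set.Icc (0:ℝ) 1) ∧ (∀ i j, P i j = P j i) ∧
    ∀ i j, ∀ x ∈ blockI γ i, ∀ y ∈ blockI γ j, f x y = P i j

/-- The homomorphism density `t(H,f)`. -/
def homDensity {v : ℕ} (H : SimpleGraph (Fin v)) [DecidableRel H.Adj] (f : ℝ → ℝ → ℝ) : ℝ :=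
  ∫ x in Set.univ.pi (fun _ : Fin v => Set.Icc (0:ℝ) 1),
    ∏ e ∈ Finset.univ.filter (fun e : Fin v × Fin v => e.1 < e.2 ∧ H.Adj e.1 e.2),
      f (x e.1) (x e.2)

/-- `‖g‖_d = (∫_{[0,1]²} g^d)^{1/d}`. -/
def normD (d : ℕ) (g : ℝ → ℝ → ℝ) : ℝ :=
  (∫ q in unitSq, (g q.1 q.2) ^ d) ^ ((d : ℝ)⁻¹)

/-- The rescaled restriction `f_{ij}` of `f` to the block `I_i × I_j`. -/
def fBlock {m : ℕ} (γ : Fin m → ℝ) (f : ℝ → ℝ → ℝ) (i j : Fin m) : ℝ → ℝ → ℝ :=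
  fun x y => f (cumSum γ (i : ℕ) + x * γ i) (cumSum γ (j : ℕ) + y * γ j)

/-- `K_{W₀}(f,a)`. -/
def Kfun (W₀ f a : ℝ → ℝ → ℝ) : ℝ :=
  ∫ q in unitSq,
    (a q.1 q.2 * f q.1 q.2 -
      Real.log (W₀ q.1 q.2 * Real.exp (a q.1 q.2) + 1 - W₀ q.1 q.2))

/-- Symmetric functions in `L²([0,1]²)`. -/
def SymL2 (a : ℝ → ℝ → ℝ) : Prop :=
  Measurable (Function.uncurry a) ∧
    (∀ᵐ q ∂(volume.restrict unitSq), a q.1 q.2 = a q.2 q.1) ∧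
    IntegrableOn (fun q : ℝ × ℝ => (a q.1 q.2) ^ 2) unitSq

/-- The matrix `P` with the entries `(a,b)` and `(b,a)` replaced by `q`. -/
def modMat {m : ℕ} (P : Fin m → Fin m → ℝ) (a b : Fin m) (q : ℝ) :
    Fin m → Fin m → ℝ :=
  fun i j => if (i = a ∧ j = b) ∨ (i = b ∧ j = a) then q else P i j

/-- The block `I_a × I_b` of the block graphon `W₀ = (P i j)` is relevant:
`P a b > 0` and replacing the entries `P a b = P b a` by any strictly smaller
(nonnegative) value strictly decreases the homomorphism density of `H`. -/
def RelevantBlock {v m : ℕ} (H : SimpleGraph (Fin v)) [DecidableRel H.Adj]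
    (γ : Fin m → ℝ) (P : Fin m → Fin m → ℝ) (W₀ : ℝ → ℝ → ℝ) (a b : Fin m) : Prop :=
  0 < P a b ∧ ∀ q : ℝ, 0 ≤ q → q < P a b →
    ∀ g : ℝ → ℝ → ℝ, IsGraphon g → IsBlockGraphon γ (modMat P a b q) g →
      homDensity H g < homDensity H W₀

open Classical in
/-- `g^{+η}`: equal to `min (g + η) 1` on `Ω` and to `g` off `Ω`. -/
def gplus (W₀ g : ℝ → ℝ → ℝ) (η : ℝ) : ℝ → ℝ → ℝ := fun x y =>
  if (x, y) ∈ OmegaSet W₀ then min (g x y + η) 1 else g x y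

open Classical in
/-- The graphon `f_{a,b,c}^γ`: `a` on `[0,γ]²`, `c` on `(γ,1]²`, `b` elsewhere. -/
def fabc (γ a b c : ℝ) : ℝ → ℝ → ℝ := fun x y =>
  if x ∈ Set.Icc (0:ℝ) γ ∧ y ∈ Set.Icc (0:ℝ) γ then a
  else if x ∈ Set.Ioc γ 1 ∧ y ∈ Set.Ioc γ 1 then c
  else b

/-- Membership in the two-block family `B^{(γ,1-γ)} = {f_{a,b,c}^γ : a,b,c ∈ [0,1]}`. -/
def memB2 (γ : ℝ) (f : ℝ → ℝ → ℝ) : Prop :=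
  ∃ a b c : ℝ, a ∈ Set.Icc (0:ℝ) 1 ∧ b ∈ Set.Icc (0:ℝ) 1 ∧ c ∈ Set.Icc (0:ℝ) 1 ∧
    f = fabc γ a b c

/-- The diagonal blocks `[0,γ]² ∪ (γ,1]²`. -/
def diagBlocks (γ : ℝ) : Set (ℝ × ℝ) :=
  (Set.Icc (0:ℝ) γ ×ˢ Set.Icc (0:ℝ) γ) ∪ (Set.Ioc γ 1 ×ˢ Set.Ioc γ 1)

/-- The operator norm `‖f‖_op = sup {‖T_f u‖₂ : ‖u‖₂ ≤ 1}` of the kernel operator `T_f`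
on `L²([0,1])`. -/
def opNorm (f : ℝ → ℝ → ℝ) : ℝ :=
  sSup {c : ℝ | ∃ u : ℝ → ℝ, Measurable u ∧
    eLpNorm u 2 (volume.restrict (Set.Icc (0:ℝ) 1)) ≤ 1 ∧
    c = (∫ x in Set.Icc (0:ℝ) 1, (∫ y in Set.Icc (0:ℝ) 1, f x y * u y) ^ 2) ^ ((2:ℝ)⁻¹)}

lemma unitSq_measurable : MeasurableSet unitSq :=
  measurableSet_Icc.prod measurableSet_Icc

lemma volume_unitSq : volume unitSq = 1 := by
  have : (volume : Measure (ℝ × ℝ)) (Set.Icc (0:ℝ) 1 ×ˢ Set.Icc (0:ℝ) 1) = 1 := by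
    rw [Measure.volume_eq_prod, Measure.prod_prod, Real.volume_Icc]
    norm_num
  simpa [unitSq] using this

lemma omega_measurable (W₀ : ℝ → ℝ → ℝ) (hW : Measurable (Function.uncurry W₀)) :
    MeasurableSet (OmegaSet W₀) := by
  have : OmegaSet W₀ = unitSq ∩ (Function.uncurry W₀) ⁻¹' (Set.Ioo (0:ℝ) 1) := rfl
  rw [this]
  exact unitSq_measurable.inter (hW measurableSet_Ioo)

/-- Pointwise bound on relative entropy. -/
lemma relEnt_le (β p u : ℝ) (hβ : 0 < β) (hp1 : β ≤ p) (hp2 : p ≤ 1 - β)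
    (hu : u ∈ Set.Icc (0:ℝ) 1) :
    relEnt p u ≤ ENNReal.ofReal (Real.log (2 / β)) := by
  obtain ⟨hu0, hu1⟩ := hu
  have hp0 : 0 < p := lt_of_lt_of_le hβ hp1
  have hp1' : p < 1 := lt_of_le_of_lt hp2 (by linarith)
  have h1p : 0 < 1 - p := by linarith
  rw [relEnt, if_neg hp0.ne', if_neg hp1'.ne]
  apply ENNReal.ofReal_le_ofReal
  have key : ∀ v q : ℝ, 0 < q → β ≤ q → 0 ≤ v → v ≤ 1 →
      v * Real.log (v / q) ≤ v * (-Real.log β) := by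
    intro v q hq hβq hv0 hv1
    rcases eq_or_lt_of_le hv0 with h | h
    · simp [← h]
    · apply mul_le_mul_of_nonneg_left _ hv0
      rw [Real.log_div h.ne' hq.ne']
      have h1 : Real.log v ≤ 0 := Real.log_nonpos hv0 hv1
      have h2 : Real.log β ≤ Real.log q := Real.log_le_log hβ hβq
      linarith
  have k1 := key u p hp0 hp1 hu0 hu1
  have k2 := key (1 - u) (1 - p) h1p (by linarith) (by linarith) (by linarith)
  have hsum : u * Real.log (u / p) + (1 - u) * Real.log ((1 - u) / (1 - p)) ≤
      -Real.log β := by nlinarith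
  have hlog : -Real.log β ≤ Real.log (2 / β) := by
    have : Real.log β⁻¹ ≤ Real.log (2 / β) := by
      apply Real.log_le_log (by positivity)
      rw [inv_eq_one_div]
      apply div_le_div_of_nonneg_right one_le_two hβ.le
    rwa [Real.log_inv] at this
  linarith

/-- (a) If `f` differs from `W₀` on a positive-measure subset of `Ωᶜ`
then `I_{W₀}(f) = ∞`.  (b) If `f ∈ W_Ω` and
`β = inf {w > 0 : w ∈ Im W₀ or 1 - w ∈ Im W₀} > 0` then `I_{W₀}(f) ≤ (1/2) log (2/β)`. -/
theorem stmt0 (W₀ f : ℝ → ℝ → ℝ) (hW : IsGraphon W₀) (hf : IsGraphon f) (β : ℝ)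
    (hβdef : β = sInf {w : ℝ | 0 < w ∧ (w ∈ imageVals W₀ ∨ 1 - w ∈ imageVals W₀)}) :
    (0 < volume {q | q ∈ unitSq \ OmegaSet W₀ ∧ f q.1 q.2 ≠ W₀ q.1 q.2} →
      Ient W₀ f = ⊤) ∧
    (MemWOmega W₀ f → 0 < β →
      Ient W₀ f ≤ ENNReal.ofReal ((1 / 2) * Real.log (2 / β))) := by
  have hWmeas := hW.1
  have hfmeas := hf.1
  have hOm := omega_measurable W₀ hWmeas
  -- W₀ is 0 or 1 off Ω (within unitSq)
  have hW01 : ∀ q : ℝ × ℝ, q ∈ unitSq → q ∉ OmegaSet W₀ →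
      W₀ q.1 q.2 = 0 ∨ W₀ q.1 q.2 = 1 := by
    intro q hq hqΩ
    have hIcc := hW.2.1 q.1 q.2
    have : ¬ W₀ q.1 q.2 ∈ Set.Ioo (0:ℝ) 1 := fun h => hqΩ ⟨hq, h⟩
    rcases eq_or_lt_of_le hIcc.1 with h | h
    · exact Or.inl h.symm
    · rcases eq_or_lt_of_le hIcc.2 with h' | h'
      · exact Or.inr h'
      · exact absurd ⟨h, h'⟩ this
  constructor
  · -- part (a)
    intro hpos
    set S := {q : ℝ × ℝ | q ∈ unitSq \ OmegaSet W₀ ∧ f q.1 q.2 ≠ W₀ q.1 q.2} with hSdef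
    have hS : MeasurableSet S := by
      have h1 : MeasurableSet {q : ℝ × ℝ | f q.1 q.2 = W₀ q.1 q.2} :=
        measurableSet_eq_fun hfmeas hWmeas
      exact ((unitSq_measurable.diff hOm).inter h1.compl)
    have key : ∫⁻ q in S, relEnt (W₀ q.1 q.2) (f q.1 q.2) = ⊤ := by
      have hcongr : ∫⁻ q in S, relEnt (W₀ q.1 q.2) (f q.1 q.2) =
          ∫⁻ _ in S, (⊤ : ℝ≥0∞) := by
        apply setLIntegral_congr_fun hS
        intro q hq
        beta_reduce
        obtain ⟨⟨hq1, hq2⟩, hne⟩ := hq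
        rcases hW01 q hq1 hq2 with h | h
        · rw [h] at hne ⊢
          simp [relEnt, hne]
        · rw [h] at hne ⊢
          simp [relEnt, hne]
      rw [hcongr, setLIntegral_const]
      exact ENNReal.top_mul hpos.ne'
    have hle : (⊤ : ℝ≥0∞) ≤ ∫⁻ q in unitSq, relEnt (W₀ q.1 q.2) (f q.1 q.2) := by
      rw [← key]
      exact lintegral_mono_set (fun q hq => hq.1.1)
    have htop : ∫⁻ q in unitSq, relEnt (W₀ q.1 q.2) (f q.1 q.2) = ⊤ := top_le_iff.mp hle
    rw [Ient, htop]
    simp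
  · -- part (b)
    intro hmem hβ
    -- β is a lower bound on W₀ and 1 - W₀ on Ω
    have hβlb : ∀ q : ℝ × ℝ, q ∈ OmegaSet W₀ → β ≤ W₀ q.1 q.2 ∧ W₀ q.1 q.2 ≤ 1 - β := by
      intro q hq
      obtain ⟨hq1, hq2⟩ := hq
      have hbdd : BddBelow {w : ℝ | 0 < w ∧ (w ∈ imageVals W₀ ∨ 1 - w ∈ imageVals W₀)} :=
        ⟨0, fun w hw => hw.1.le⟩
      constructor
      · rw [hβdef]
        exact csInf_le hbdd ⟨hq2.1, Or.inl ⟨q, hq1, rfl⟩⟩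
      · have : β ≤ 1 - W₀ q.1 q.2 := by
          rw [hβdef]
          exact csInf_le hbdd ⟨by linarith [hq2.2], Or.inr ⟨q, hq1, by ring⟩⟩
        linarith
    set C := ENNReal.ofReal (Real.log (2 / β)) with hCdef
    -- a.e. equality on the complement
    have hfW : ∀ᵐ q ∂(volume : Measure (ℝ × ℝ)),
        q ∈ unitSq \ OmegaSet W₀ → f q.1 q.2 = W₀ q.1 q.2 := by
      rw [← ae_restrict_iff' (unitSq_measurable.diff hOm)]
      exact hmem.2
    have hbound : ∀ᵐ q ∂(volume.restrict unitSq),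
        relEnt (W₀ q.1 q.2) (f q.1 q.2) ≤ C := by
      filter_upwards [ae_restrict_mem unitSq_measurable, ae_restrict_of_ae hfW]
        with q hq hq'
      by_cases hΩ : q ∈ OmegaSet W₀
      · obtain ⟨h1, h2⟩ := hβlb q hΩ
        exact relEnt_le β _ _ hβ h1 h2 (hf.2.1 q.1 q.2)
      · have heq : f q.1 q.2 = W₀ q.1 q.2 := hq' ⟨hq, hΩ⟩
        rcases hW01 q hq hΩ with h | h
        · rw [heq, h]
          simp [relEnt]
        · rw [heq, h]
          simp [relEnt]
    have hint : ∫⁻ q in unitSq, relEnt (W₀ q.1 q.2) (f q.1 q.2) ≤ C := by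
      calc ∫⁻ q in unitSq, relEnt (W₀ q.1 q.2) (f q.1 q.2)
          ≤ ∫⁻ _ in unitSq, C := lintegral_mono_ae hbound
        _ = C * volume unitSq := setLIntegral_const _ _
        _ = C := by rw [volume_unitSq, mul_one]
    rw [Ient]
    calc (1 / 2 : ℝ≥0∞) * ∫⁻ q in unitSq, relEnt (W₀ q.1 q.2) (f q.1 q.2)
        ≤ (1 / 2) * C := mul_le_mul_right hint _
      _ = ENNReal.ofReal ((1 / 2) * Real.log (2 / β)) := by
          rw [ENNReal.ofReal_mul (by norm_num : (0:ℝ) ≤ 1/2)]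
          congr 1
          rw [ENNReal.ofReal_div_of_pos two_pos, ENNReal.ofReal_one, ENNReal.ofReal_ofNat]

end GraphonLDP
end
end

section
/- Let W_0 be a graphon satisfying β := inf{w > 0 : w lies in the image of W_0 or 1−w lies in the image of W_0} > 0. Then for every ε > 0 there exists η > 0 such that for all f, g ∈ W_Ω with ‖f − g‖_∞ ≤ η one has |I_{W_0}(f) − I_{W_0}(g)| ≤ ε. -/
open MeasureTheory Set Filter
open scoped ENNReal NNReal

noncomputable section

namespace GraphonLDP

/-- uniform continuity of `I_{W₀}` on `W_Ω` in the `L^∞` norm. -/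
theorem stmt1 (W₀ : ℝ → ℝ → ℝ) (hW : IsGraphon W₀) (β : ℝ)
    (hβdef : β = sInf {w : ℝ | 0 < w ∧ (w ∈ imageVals W₀ ∨ 1 - w ∈ imageVals W₀)})
    (hβ : 0 < β) (ε : ℝ) (hε : 0 < ε) :
    ∃ η > 0, ∀ f g : ℝ → ℝ → ℝ, MemWOmega W₀ f → MemWOmega W₀ g →
      eLpNorm (fun q : ℝ × ℝ => f q.1 q.2 - g q.1 q.2) ⊤ (volume.restrict unitSq) ≤
        ENNReal.ofReal η →
      Ient W₀ f ≤ Ient W₀ g + ENNReal.ofReal ε ∧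
        Ient W₀ g ≤ Ient W₀ f + ENNReal.ofReal ε := by
  classical
  set S : Set ℝ := {w : ℝ | 0 < w ∧ (w ∈ imageVals W₀ ∨ 1 - w ∈ imageVals W₀)} with hS
  have hbdd : BddBelow S := ⟨0, fun w hw => hw.1.le⟩
  have hKcompact : IsCompact (Set.Icc β (1-β) ×ˢ Set.Icc (0:ℝ) 1) :=
    isCompact_Icc.prod isCompact_Icc
  have hGcont : ContinuousOn (fun z : ℝ × ℝ => hRel z.1 z.2)
      (Set.Icc β (1-β) ×ˢ Set.Icc (0:ℝ) 1) := by
    have hH : ContinuousOn (fun z : ℝ × ℝ =>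
        z.2 * Real.log z.2 - z.2 * Real.log z.1 +
        ((1 - z.2) * Real.log (1 - z.2) - (1 - z.2) * Real.log (1 - z.1)))
        (Set.Icc β (1-β) ×ˢ Set.Icc (0:ℝ) 1) := by
      apply ContinuousOn.add
      · apply ContinuousOn.sub
        · exact (Real.continuous_mul_log.comp continuous_snd).continuousOn
        · apply ContinuousOn.mul continuous_snd.continuousOn
          intro z hz
          have h0 : z.1 ≠ 0 := by have := hz.1.1; intro h; rw [h] at this; linarith
          exact (continuous_fst.continuousAt.log h0).continuousWithinAt
      · apply ContinuousOn.sub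
        · exact (Real.continuous_mul_log.comp (continuous_const.sub continuous_snd)).continuousOn
        · apply ContinuousOn.mul (continuous_const.sub continuous_snd).continuousOn
          intro z hz
          have h0 : (1:ℝ) - z.1 ≠ 0 := by have := hz.1.2; intro h; linarith [hβ]
          exact ((continuous_const.sub continuous_fst).continuousAt.log h0).continuousWithinAt
    apply hH.congr
    intro z hz
    have hp : z.1 ≠ 0 := by have := hz.1.1; intro h; rw [h] at this; linarith
    have hp1 : (1:ℝ) - z.1 ≠ 0 := by have := hz.1.2; intro h; linarith [hβ]
    have e1 : z.2 * Real.log (z.2 / z.1) = z.2 * Real.log z.2 - z.2 * Real.log z.1 := by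
      by_cases h : z.2 = 0
      · simp [h]
      · rw [Real.log_div h hp, mul_sub]
    have e2 : (1 - z.2) * Real.log ((1 - z.2) / (1 - z.1))
        = (1 - z.2) * Real.log (1 - z.2) - (1 - z.2) * Real.log (1 - z.1) := by
      by_cases h : (1:ℝ) - z.2 = 0
      · simp [h]
      · rw [Real.log_div h hp1, mul_sub]
    simp only [hRel]
    rw [e1, e2]
  have hUC := Metric.uniformContinuousOn_iff.mp
    (hKcompact.uniformContinuousOn_of_continuous hGcont) ε hε
  obtain ⟨δ, hδ, hδ'⟩ := hUC
  have hUnit : MeasurableSet unitSq := measurableSet_Icc.prod measurableSet_Icc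
  have hΩ : MeasurableSet (OmegaSet W₀) := by
    have heq : OmegaSet W₀ = unitSq ∩ (Function.uncurry W₀) ⁻¹' (Set.Ioo 0 1) := rfl
    rw [heq]
    exact hUnit.inter (hW.1 measurableSet_Ioo)
  have hvol : volume unitSq = 1 := by
    rw [unitSq, Measure.volume_eq_prod, Measure.prod_prod, Real.volume_Icc]
    norm_num
  have key : ∀ f g : ℝ → ℝ → ℝ, MemWOmega W₀ f → MemWOmega W₀ g →
      (∀ᵐ q : ℝ × ℝ ∂volume, q ∈ unitSq → |f q.1 q.2 - g q.1 q.2| ≤ δ/2) →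
      Ient W₀ f ≤ Ient W₀ g + ENNReal.ofReal ε := by
    intro f g hf hg hfg
    have hfW := (ae_restrict_iff' (hUnit.diff hΩ)).mp hf.2
    have hgW := (ae_restrict_iff' (hUnit.diff hΩ)).mp hg.2
    have hpt : ∀ᵐ q : ℝ × ℝ ∂volume, q ∈ unitSq →
        relEnt (W₀ q.1 q.2) (f q.1 q.2) ≤ relEnt (W₀ q.1 q.2) (g q.1 q.2) + ENNReal.ofReal ε := by
      filter_upwards [hfg, hfW, hgW] with q h1 h2 h3 hq
      by_cases hΩq : q ∈ OmegaSet W₀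
      · obtain ⟨-, hW0, hW1⟩ := hΩq
        have hβp : β ≤ W₀ q.1 q.2 := by
          rw [hβdef]; exact csInf_le hbdd ⟨hW0, Or.inl ⟨q, hq, rfl⟩⟩
        have hβ1p : β ≤ 1 - W₀ q.1 q.2 := by
          rw [hβdef]
          exact csInf_le hbdd ⟨by linarith, Or.inr ⟨q, hq, by ring⟩⟩
        have hmemf : ((W₀ q.1 q.2, f q.1 q.2) : ℝ × ℝ) ∈
            Set.Icc β (1-β) ×ˢ Set.Icc (0:ℝ) 1 :=
          ⟨⟨hβp, by linarith⟩, hf.1.2.1 q.1 q.2⟩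
        have hmemg : ((W₀ q.1 q.2, g q.1 q.2) : ℝ × ℝ) ∈
            Set.Icc β (1-β) ×ˢ Set.Icc (0:ℝ) 1 :=
          ⟨⟨hβp, by linarith⟩, hg.1.2.1 q.1 q.2⟩
        have hdist : dist ((W₀ q.1 q.2, f q.1 q.2) : ℝ × ℝ) (W₀ q.1 q.2, g q.1 q.2) < δ := by
          rw [Prod.dist_eq]
          simp only [dist_self, Real.dist_eq]
          have := h1 hq
          rw [max_lt_iff]
          constructor
          · exact hδ
          · linarith
        have hGlt := hδ' _ hmemf _ hmemg hdist
        simp only [Real.dist_eq] at hGlt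
        have hle : hRel (W₀ q.1 q.2) (f q.1 q.2) ≤ hRel (W₀ q.1 q.2) (g q.1 q.2) + ε := by
          have := abs_sub_lt_iff.mp hGlt
          linarith [this.1]
        have hne0 : W₀ q.1 q.2 ≠ 0 := ne_of_gt hW0
        have hne1 : W₀ q.1 q.2 ≠ 1 := ne_of_lt hW1
        have hre : ∀ u : ℝ, relEnt (W₀ q.1 q.2) u = ENNReal.ofReal (hRel (W₀ q.1 q.2) u) := by
          intro u; simp [relEnt, hne0, hne1, hRel]
        rw [hre, hre]
        calc ENNReal.ofReal (hRel (W₀ q.1 q.2) (f q.1 q.2))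
            ≤ ENNReal.ofReal (hRel (W₀ q.1 q.2) (g q.1 q.2) + ε) := ENNReal.ofReal_le_ofReal hle
          _ ≤ _ := ENNReal.ofReal_add_le
      · have hf' : f q.1 q.2 = W₀ q.1 q.2 := h2 ⟨hq, hΩq⟩
        have hg' : g q.1 q.2 = W₀ q.1 q.2 := h3 ⟨hq, hΩq⟩
        rw [hf', hg']
        exact le_self_add
    have hmono := lintegral_mono_ae ((ae_restrict_iff' hUnit).mpr hpt)
    have hadd : (∫⁻ q in unitSq, (relEnt (W₀ q.1 q.2) (g q.1 q.2) + ENNReal.ofReal ε))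
        = (∫⁻ q in unitSq, relEnt (W₀ q.1 q.2) (g q.1 q.2)) + ENNReal.ofReal ε := by
      rw [lintegral_add_right _ measurable_const, lintegral_const,
        Measure.restrict_apply_univ, hvol, mul_one]
    have hhalf : (1/2 : ℝ≥0∞) * ENNReal.ofReal ε ≤ ENNReal.ofReal ε := by
      rw [one_div, ← ENNReal.div_eq_inv_mul]
      exact ENNReal.half_le_self
    calc Ient W₀ f = (1/2 : ℝ≥0∞) * ∫⁻ q in unitSq, relEnt (W₀ q.1 q.2) (f q.1 q.2) := rfl
      _ ≤ (1/2 : ℝ≥0∞) * ((∫⁻ q in unitSq, relEnt (W₀ q.1 q.2) (g q.1 q.2)) + ENNReal.ofReal ε) :=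
          mul_le_mul_right (hmono.trans_eq hadd) _
      _ = Ient W₀ g + (1/2 : ℝ≥0∞) * ENNReal.ofReal ε := by rw [mul_add]; rfl
      _ ≤ Ient W₀ g + ENNReal.ofReal ε := add_le_add_right hhalf _
  refine ⟨δ/2, by positivity, fun f g hf hg hle => ?_⟩
  have hae : ∀ᵐ q : ℝ × ℝ ∂volume, q ∈ unitSq → |f q.1 q.2 - g q.1 q.2| ≤ δ/2 := by
    rw [eLpNorm_exponent_top] at hle
    have h2 : ∀ᵐ q : ℝ × ℝ ∂(volume.restrict unitSq),
        (‖f q.1 q.2 - g q.1 q.2‖₊ : ℝ≥0∞) ≤ ENNReal.ofReal (δ/2) := by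
      filter_upwards [ae_le_eLpNormEssSup
        (f := fun q : ℝ × ℝ => f q.1 q.2 - g q.1 q.2) (μ := volume.restrict unitSq)] with q hq
      exact hq.trans hle
    have h3 := (ae_restrict_iff' hUnit).mp h2
    filter_upwards [h3] with q hq hmem
    have h4 := hq hmem
    rw [← enorm_eq_nnnorm, ← ofReal_norm,
      ENNReal.ofReal_le_ofReal_iff (by positivity)] at h4
    rwa [Real.norm_eq_abs] at h4
  refine ⟨key f g hf hg hae, key g f hg hf ?_⟩
  filter_upwards [hae] with q hq hmem
  rw [abs_sub_comm]
  exact hq hmem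


end GraphonLDP
end
end

section
/- Let W_0 be a graphon and let S denote the set of symmetric functions in L^2([0,1]^2). For a ∈ S and a graphon f, set K_{W_0}(f,a) = ∫_{[0,1]^2} [ a(x,y) f(x,y) − log( W_0(x,y) e^{a(x,y)} + 1 − W_0(x,y) ) ] dx dy. Then for every graphon f, I_{W_0}(f) = (1/2) sup_{a ∈ S} K_{W_0}(f,a), as an identity in [0,∞]. -/
open MeasureTheory Set Filter
open scoped ENNReal NNReal

noncomputable section

namespace GraphonLDP

open Topology

def phi (p u t : ℝ) : ℝ := t * u - Real.log (p * Real.exp t + 1 - p)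

lemma s_pos {p : ℝ} (hp0 : 0 ≤ p) (hp1 : p ≤ 1) (t : ℝ) :
    0 < p * Real.exp t + 1 - p := by
  nlinarith [Real.exp_pos t, mul_nonneg hp0 (Real.exp_pos t).le,
    mul_pos (Real.exp_pos t) (Real.exp_pos t)]

lemma gibbs {q u : ℝ} (hq0 : 0 < q) (hq1 : q < 1) (hu0 : 0 ≤ u) (hu1 : u ≤ 1) :
    0 ≤ u * Real.log (u / q) + (1 - u) * Real.log ((1 - u) / (1 - q)) := by
  rcases eq_or_lt_of_le hu0 with h0 | h0
  · have : (0:ℝ) ≤ Real.log (1 / (1 - q)) := by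
      rw [one_div, Real.log_inv]
      simp only [Left.nonneg_neg_iff]
      exact Real.log_nonpos (by linarith) (by linarith)
    simpa [← h0] using this
  rcases eq_or_lt_of_le hu1 with h1 | h1
  · have : (0:ℝ) ≤ Real.log (1 / q) := by
      rw [one_div, Real.log_inv]
      simp only [Left.nonneg_neg_iff]
      exact Real.log_nonpos hq0.le hq1.le
    simp [h1]
    simpa [h1] using this
  · have l1 := Real.log_le_sub_one_of_pos (show 0 < q / u from div_pos hq0 h0)
    have l2 := Real.log_le_sub_one_of_pos
      (show 0 < (1 - q) / (1 - u) from div_pos (by linarith) (by linarith))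
    rw [Real.log_div hq0.ne' h0.ne'] at l1
    rw [Real.log_div (by linarith : (1:ℝ) - q ≠ 0) (by linarith : (1:ℝ) - u ≠ 0)] at l2
    rw [Real.log_div h0.ne' hq0.ne',
      Real.log_div (by linarith : (1:ℝ) - u ≠ 0) (by linarith : (1:ℝ) - q ≠ 0)]
    have A : u * (Real.log q - Real.log u) ≤ q - u := by
      have := mul_le_mul_of_nonneg_left l1 hu0
      have e : u * (q / u - 1) = q - u := by field_simp
      linarith [this.trans_eq e]
    have B : (1 - u) * (Real.log (1 - q) - Real.log (1 - u)) ≤ u - q := by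
      have := mul_le_mul_of_nonneg_left l2 (by linarith : (0:ℝ) ≤ 1 - u)
      have e : (1 - u) * ((1 - q) / (1 - u) - 1) = u - q := by
        have h : (1:ℝ) - u ≠ 0 := by linarith
        field_simp
        ring
      linarith [this.trans_eq e]
    nlinarith [A, B]





lemma phi_le_hRel {p u : ℝ} (hp0 : 0 < p) (hp1 : p < 1) (hu0 : 0 ≤ u) (hu1 : u ≤ 1)
    (t : ℝ) : phi p u t ≤ hRel p u := by
  have hspos : 0 < p * Real.exp t + 1 - p := s_pos hp0.le hp1.le t
  set s := p * Real.exp t + 1 - p with hs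
  set q := p * Real.exp t / s with hqdef
  have hq0 : 0 < q := div_pos (mul_pos hp0 (Real.exp_pos t)) hspos
  have hq1 : q < 1 := by
    rw [hqdef, div_lt_one hspos]; rw [hs]; linarith
  have h1q : 1 - q = (1 - p) / s := by
    rw [hqdef]; field_simp; rw [hs]; ring
  have lq : Real.log q = Real.log p + t - Real.log s := by
    rw [hqdef, Real.log_div (mul_pos hp0 (Real.exp_pos t)).ne' hspos.ne',
      Real.log_mul hp0.ne' (Real.exp_pos t).ne', Real.log_exp]
  have l1q : Real.log (1 - q) = Real.log (1 - p) - Real.log s := by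
    rw [h1q, Real.log_div (by linarith : (1:ℝ) - p ≠ 0) hspos.ne']
  have key : hRel p u - phi p u t
      = u * Real.log (u / q) + (1 - u) * Real.log ((1 - u) / (1 - q)) := by
    rcases eq_or_lt_of_le hu0 with h0 | h0
    · rw [← h0]
      simp only [phi, hRel, zero_mul, zero_div, Real.log_zero, mul_zero, sub_zero, one_mul,
        zero_sub, sub_self]
      rw [Real.log_div one_ne_zero (by linarith : (1:ℝ) - p ≠ 0),
          Real.log_div one_ne_zero (by linarith : (1:ℝ) - q ≠ 0), l1q]
      ring
    rcases eq_or_lt_of_le hu1 with h1 | h1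
    · rw [h1]
      simp only [phi, hRel, sub_self, zero_mul, add_zero, mul_one, one_mul, zero_div,
        Real.log_zero, mul_zero]
      rw [Real.log_div one_ne_zero hp0.ne', Real.log_div one_ne_zero hq0.ne', lq]
      ring
    · rw [hRel, phi,
        Real.log_div h0.ne' hp0.ne', Real.log_div h0.ne' hq0.ne',
        Real.log_div (by linarith : (1:ℝ) - u ≠ 0) (by linarith : (1:ℝ) - p ≠ 0),
        Real.log_div (by linarith : (1:ℝ) - u ≠ 0) (by linarith : (1:ℝ) - q ≠ 0),
        lq, l1q]
      ring
  have := gibbs hq0 hq1 hu0 hu1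
  linarith

lemma phi_tstar {p u : ℝ} (hp0 : 0 < p) (hp1 : p < 1) (hu0 : 0 < u) (hu1 : u < 1) :
    phi p u (Real.log (u * (1 - p) / (p * (1 - u)))) = hRel p u := by
  set t := Real.log (u * (1 - p) / (p * (1 - u))) with htdef
  have hx : (0:ℝ) < u * (1 - p) / (p * (1 - u)) :=
    div_pos (mul_pos hu0 (by linarith)) (mul_pos hp0 (by linarith))
  have he : Real.exp t = u * (1 - p) / (p * (1 - u)) := Real.exp_log hx
  have hs : p * Real.exp t + 1 - p = (1 - p) / (1 - u) := by
    rw [he]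
    have h1 : p * (1 - u) ≠ 0 := (mul_pos hp0 (by linarith : (0:ℝ) < 1 - u)).ne'
    have h2 : (1:ℝ) - u ≠ 0 := by linarith
    field_simp
    ring
  have ht : t = Real.log u + Real.log (1 - p) - (Real.log p + Real.log (1 - u)) := by
    rw [htdef, Real.log_div (mul_pos hu0 (by linarith : (0:ℝ) < 1 - p)).ne'
        (mul_pos hp0 (by linarith : (0:ℝ) < 1 - u)).ne',
      Real.log_mul hu0.ne' (by linarith : (1:ℝ) - p ≠ 0),
      Real.log_mul hp0.ne' (by linarith : (1:ℝ) - u ≠ 0)]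
  rw [phi, hs, ht, hRel,
    Real.log_div hu0.ne' hp0.ne',
    Real.log_div (by linarith : (1:ℝ) - u ≠ 0) (by linarith : (1:ℝ) - p ≠ 0),
    Real.log_div (by linarith : (1:ℝ) - p ≠ 0) (by linarith : (1:ℝ) - u ≠ 0)]
  ring



def Tn (n : ℕ) (p u : ℝ) : ℝ :=
  if p ≤ 0 then (if u ≤ 0 then 0 else (n : ℝ))
  else if 1 ≤ p then (if 1 ≤ u then 0 else -(n : ℝ))
  else if u ≤ 0 then -(n : ℝ)
  else if 1 ≤ u then (n : ℝ)
  else max (-(n : ℝ)) (min (n : ℝ) (Real.log (u * (1 - p) / (p * (1 - u)))))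

lemma phi_hasDerivAt (p u t : ℝ) (hs : 0 < p * Real.exp t + 1 - p) :
    HasDerivAt (phi p u) (u - p * Real.exp t / (p * Real.exp t + 1 - p)) t := by
  have h1 : HasDerivAt (fun x : ℝ => p * Real.exp x + 1 - p) (p * Real.exp t) t := by
    simpa using (((Real.hasDerivAt_exp t).const_mul p).add_const 1).sub_const p
  have := ((hasDerivAt_id t).mul_const u).sub (h1.log hs.ne')
  have e : phi p u = (fun y => id y * u) - fun y => Real.log (p * Real.exp y + 1 - p) := by
    funext x; simp [phi]
  rw [e]; exact this.congr_deriv (by ring)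

lemma phi_zero (p u : ℝ) : phi p u 0 = 0 := by
  simp [phi]

lemma phi_monotoneOn {p u : ℝ} (hp0 : 0 < p) (hp1 : p < 1) (hu0 : 0 < u) (hu1 : u < 1) :
    MonotoneOn (phi p u) (Set.Iic (Real.log (u * (1 - p) / (p * (1 - u))))) := by
  have hx : (0:ℝ) < u * (1 - p) / (p * (1 - u)) :=
    div_pos (mul_pos hu0 (by linarith)) (mul_pos hp0 (by linarith))
  have hc : Continuous (phi p u) := by
    have h2 : ∀ x : ℝ, p * Real.exp x + 1 - p ≠ 0 := fun x => (s_pos hp0.le hp1.le x).ne'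
    exact (continuous_id.mul continuous_const).sub
      ((((continuous_const.mul Real.continuous_exp).add continuous_const).sub
        continuous_const).log h2)
  apply monotoneOn_of_deriv_nonneg (convex_Iic _) hc.continuousOn
  · intro x hx'
    exact ((phi_hasDerivAt p u x (s_pos hp0.le hp1.le x)).differentiableAt).differentiableWithinAt
  · intro x hxlt
    rw [interior_Iic] at hxlt
    rw [(phi_hasDerivAt p u x (s_pos hp0.le hp1.le x)).deriv]
    have he : Real.exp x < u * (1 - p) / (p * (1 - u)) := by
      have := Real.exp_lt_exp.2 hxlt
      rwa [Real.exp_log hx] at this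
    have hsp := s_pos hp0.le hp1.le x
    rw [sub_nonneg, div_le_iff₀ hsp]
    have h2 : Real.exp x * (p * (1 - u)) < u * (1 - p) := (lt_div_iff₀ (mul_pos hp0 (by linarith))).1 he
    nlinarith
  
lemma phi_antitoneOn {p u : ℝ} (hp0 : 0 < p) (hp1 : p < 1) (hu0 : 0 < u) (hu1 : u < 1) :
    AntitoneOn (phi p u) (Set.Ici (Real.log (u * (1 - p) / (p * (1 - u))))) := by
  have hx : (0:ℝ) < u * (1 - p) / (p * (1 - u)) :=
    div_pos (mul_pos hu0 (by linarith)) (mul_pos hp0 (by linarith))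
  have hc : Continuous (phi p u) := by
    have h2 : ∀ x : ℝ, p * Real.exp x + 1 - p ≠ 0 := fun x => (s_pos hp0.le hp1.le x).ne'
    exact (continuous_id.mul continuous_const).sub
      ((((continuous_const.mul Real.continuous_exp).add continuous_const).sub
        continuous_const).log h2)
  apply antitoneOn_of_deriv_nonpos (convex_Ici _) hc.continuousOn
  · intro x hx'
    exact ((phi_hasDerivAt p u x (s_pos hp0.le hp1.le x)).differentiableAt).differentiableWithinAt
  · intro x hxlt
    rw [interior_Ici] at hxlt
    rw [(phi_hasDerivAt p u x (s_pos hp0.le hp1.le x)).deriv]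
    have he : u * (1 - p) / (p * (1 - u)) < Real.exp x := by
      have := Real.exp_lt_exp.2 hxlt
      rwa [Real.exp_log hx] at this
    have hsp := s_pos hp0.le hp1.le x
    rw [sub_nonpos, le_div_iff₀ hsp]
    have h2 : u * (1 - p) < Real.exp x * (p * (1 - u)) := (div_lt_iff₀ (mul_pos hp0 (by linarith))).1 he
    nlinarith





lemma relEnt_interior {p : ℝ} (hp0 : 0 < p) (hp1 : p < 1) (u : ℝ) :
    relEnt p u = ENNReal.ofReal (hRel p u) := by
  rw [relEnt, if_neg hp0.ne', if_neg hp1.ne, hRel]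

lemma ofReal_phi_le_relEnt {p u : ℝ} (hp : p ∈ Set.Icc (0:ℝ) 1) (hu : u ∈ Set.Icc (0:ℝ) 1)
    (t : ℝ) : ENNReal.ofReal (phi p u t) ≤ relEnt p u := by
  obtain ⟨hp0, hp1⟩ := hp
  obtain ⟨hu0, hu1⟩ := hu
  rcases eq_or_lt_of_le hp0 with h0 | h0
  · rw [relEnt, if_pos h0.symm]
    rcases eq_or_ne u 0 with hu' | hu'
    · rw [if_pos hu']
      simp [phi, ← h0, hu']
    · rw [if_neg hu']; exact le_top
  rcases eq_or_lt_of_le hp1 with h1 | h1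
  · rw [relEnt, if_neg (by linarith), if_pos h1]
    rcases eq_or_ne u 1 with hu' | hu'
    · rw [if_pos hu']
      simp [phi, h1, hu', Real.log_exp]
    · rw [if_neg hu']; exact le_top
  · rw [relEnt_interior h0 h1]
    exact ENNReal.ofReal_le_ofReal (phi_le_hRel h0 h1 hu0 hu1 t)

lemma phi_Tn_nonneg {p u : ℝ} (hp : p ∈ Set.Icc (0:ℝ) 1) (hu : u ∈ Set.Icc (0:ℝ) 1) (n : ℕ) :
    0 ≤ phi p u (Tn n p u) := by
  obtain ⟨hp0, hp1⟩ := hp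
  obtain ⟨hu0, hu1⟩ := hu
  rw [Tn]
  split_ifs with h1 h2 h3 h4 h5 h6
  · have : p = 0 := le_antisymm h1 hp0
    simp [phi, this]
  · have : p = 0 := le_antisymm h1 hp0
    simp [phi, this]
    positivity
  · have : p = 1 := le_antisymm hp1 h3
    simp [phi, this]
  · have hpe : p = 1 := le_antisymm hp1 h3
    have h' : u < 1 := lt_of_not_ge h4
    rw [phi, hpe]
    simp only [one_mul, add_sub_cancel_right, Real.log_exp]
    nlinarith
  · -- 0 < p < 1, u = 0
    have h1' : 0 < p := lt_of_not_ge h1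
    have h2' : p < 1 := lt_of_not_ge h3
    have hue : u = 0 := le_antisymm h5 hu0
    rw [phi, hue]
    simp only [mul_zero, zero_sub, Left.nonneg_neg_iff]
    apply Real.log_nonpos (s_pos hp0 hp1 _).le
    nlinarith [Real.exp_le_one_iff.2 (neg_nonpos.2 (Nat.cast_nonneg n) : -(n:ℝ) ≤ 0)]
  · -- 0 < p < 1, u = 1
    have h1' : 0 < p := lt_of_not_ge h1
    have h2' : p < 1 := lt_of_not_ge h3
    have hue : u = 1 := le_antisymm hu1 h6
    rw [phi, hue]
    rw [mul_one, sub_nonneg, Real.log_le_iff_le_exp (s_pos hp0 hp1 _)]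
    nlinarith [Real.one_le_exp (Nat.cast_nonneg n : (0:ℝ) ≤ n)]
  · -- interior
    have h1' : 0 < p := lt_of_not_ge h1
    have h2' : p < 1 := lt_of_not_ge h3
    have hu0' : 0 < u := lt_of_not_ge h5
    have hu1' : u < 1 := lt_of_not_ge h6
    set c := Real.log (u * (1 - p) / (p * (1 - u))) with hc
    rcases le_or_gt 0 c with hcpos | hcneg
    · have hmin0 : (0:ℝ) ≤ min (n:ℝ) c := le_min (Nat.cast_nonneg n) hcpos
      have heq : max (-(n:ℝ)) (min (n:ℝ) c) = min (n:ℝ) c :=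
        max_eq_right (le_trans (neg_nonpos.2 (Nat.cast_nonneg n)) hmin0)
      rw [heq]
      have := phi_monotoneOn h1' h2' hu0' hu1'
        (Set.mem_Iic.2 (le_trans hmin0 (min_le_right _ _)) : (0:ℝ) ∈ Set.Iic c)
        (Set.mem_Iic.2 (min_le_right _ _)) hmin0
      rwa [phi_zero] at this
    · have hmineq : min (n:ℝ) c = c := min_eq_right (le_trans hcneg.le (Nat.cast_nonneg n))
      rw [hmineq]
      have htle : max (-(n:ℝ)) c ≤ 0 := max_le (neg_nonpos.2 (Nat.cast_nonneg n)) hcneg.le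
      have htge : c ≤ max (-(n:ℝ)) c := le_max_right _ _
      have := phi_antitoneOn h1' h2' hu0' hu1'
        (Set.mem_Ici.2 htge) (Set.mem_Ici.2 hcneg.le : (0:ℝ) ∈ Set.Ici c) htle
      rwa [phi_zero] at this



lemma tendsto_phi_Tn {p u : ℝ} (hp : p ∈ Set.Icc (0:ℝ) 1) (hu : u ∈ Set.Icc (0:ℝ) 1) :
    Tendsto (fun n : ℕ => ENNReal.ofReal (phi p u (Tn n p u))) atTop (𝓝 (relEnt p u)) := by
  obtain ⟨hp0, hp1⟩ := hp
  obtain ⟨hu0, hu1⟩ := hu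
  have hexp0 : Tendsto (fun n : ℕ => Real.exp (-(n:ℝ))) atTop (𝓝 0) :=
    Real.tendsto_exp_atBot.comp (tendsto_neg_atTop_atBot.comp tendsto_natCast_atTop_atTop)
  rcases eq_or_lt_of_le hp0 with h0 | h0
  · -- p = 0
    rcases eq_or_lt_of_le hu0 with hu0' | hu0'
    · have : ∀ n : ℕ, ENNReal.ofReal (phi p u (Tn n p u)) = relEnt p u := by
        intro n
        rw [← h0, ← hu0', relEnt]
        simp [Tn, phi]
      simpa [funext this] using (tendsto_const_nhds :
        Tendsto (fun _ : ℕ => relEnt p u) atTop (𝓝 (relEnt p u)))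
    · have hT : ∀ n : ℕ, Tn n p u = (n : ℝ) := by
        intro n; rw [← h0, Tn, if_pos le_rfl, if_neg (not_le.2 hu0')]
      have hphi : ∀ n : ℕ, phi p u (Tn n p u) = (n : ℝ) * u := by
        intro n; rw [hT, ← h0, phi]; simp
      have hre : relEnt p u = ⊤ := by rw [← h0, relEnt, if_pos rfl, if_neg hu0'.ne']
      rw [hre]
      simp only [hphi]
      exact ENNReal.tendsto_ofReal_atTop.comp
        (tendsto_natCast_atTop_atTop.atTop_mul_const hu0')
  rcases eq_or_lt_of_le hp1 with h1 | h1
  · -- p = 1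
    rcases eq_or_lt_of_le hu1 with hu1' | hu1'
    · have : ∀ n : ℕ, ENNReal.ofReal (phi p u (Tn n p u)) = relEnt p u := by
        intro n
        rw [h1, hu1', relEnt]
        simp [Tn, phi]
      simpa [funext this] using (tendsto_const_nhds :
        Tendsto (fun _ : ℕ => relEnt p u) atTop (𝓝 (relEnt p u)))
    · have hT : ∀ n : ℕ, Tn n p u = -(n : ℝ) := by
        intro n
        rw [h1, Tn, if_neg (by norm_num), if_pos le_rfl, if_neg (not_le.2 hu1')]
      have hphi : ∀ n : ℕ, phi p u (Tn n p u) = (1 - u) * (n : ℝ) := by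
        intro n; rw [hT, h1, phi]
        simp only [one_mul, add_sub_cancel_right, Real.log_exp]
        ring
      have hre : relEnt p u = ⊤ := by
        rw [h1, relEnt, if_neg one_ne_zero, if_pos rfl, if_neg hu1'.ne]
      rw [hre]
      simp only [hphi]
      exact ENNReal.tendsto_ofReal_atTop.comp
        (tendsto_natCast_atTop_atTop.const_mul_atTop (by linarith))
  -- 0 < p < 1
  rcases eq_or_lt_of_le hu0 with hu0' | hu0'
  · -- u = 0
    have hT : ∀ n : ℕ, Tn n p u = -(n : ℝ) := by
      intro n
      rw [Tn, if_neg (not_le.2 h0), if_neg (not_le.2 h1), if_pos (le_of_eq hu0'.symm)]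
    have hphi : ∀ n : ℕ, phi p u (Tn n p u) = -Real.log (p * Real.exp (-(n:ℝ)) + 1 - p) := by
      intro n; rw [hT, ← hu0', phi]; ring_nf
    have hre : relEnt p u = ENNReal.ofReal (-Real.log (1 - p)) := by
      rw [relEnt_interior h0 h1, ← hu0', hRel]
      norm_num
    rw [hre]
    simp only [hphi]
    apply (ENNReal.continuous_ofReal.tendsto _).comp
    apply Tendsto.neg
    have h2 : Tendsto (fun n : ℕ => p * Real.exp (-(n:ℝ)) + 1 - p) atTop (𝓝 (1 - p)) := by
      have := ((hexp0.const_mul p).add_const 1).sub_const p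
      simpa using this
    exact ((Real.continuousAt_log (by linarith : (1:ℝ) - p ≠ 0)).tendsto).comp h2
  rcases eq_or_lt_of_le hu1 with hu1' | hu1'
  · -- u = 1
    have hT : ∀ n : ℕ, Tn n p u = (n : ℝ) := by
      intro n
      rw [Tn, if_neg (not_le.2 h0), if_neg (not_le.2 h1), if_neg (not_le.2 (by linarith)),
        if_pos (le_of_eq hu1'.symm)]
    have hpos : ∀ n : ℕ, (0:ℝ) < p + (1 - p) * Real.exp (-(n:ℝ)) := by
      intro n
      have := Real.exp_pos (-(n:ℝ))
      nlinarith
    have hphi : ∀ n : ℕ, phi p u (Tn n p u) = -Real.log (p + (1 - p) * Real.exp (-(n:ℝ))) := by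
      intro n
      have h : p * Real.exp (n:ℝ) + 1 - p
          = Real.exp (n:ℝ) * (p + (1 - p) * Real.exp (-(n:ℝ))) := by
        rw [Real.exp_neg]
        field_simp
        ring
      rw [hT, hu1', phi, mul_one, h, Real.log_mul (Real.exp_ne_zero _) (hpos n).ne',
        Real.log_exp]
      ring
    have hre : relEnt p u = ENNReal.ofReal (-Real.log p) := by
      rw [relEnt_interior h0 h1, hu1', hRel]
      norm_num
    rw [hre]
    simp only [hphi]
    apply (ENNReal.continuous_ofReal.tendsto _).comp
    apply Tendsto.neg
    have h2 : Tendsto (fun n : ℕ => p + (1 - p) * Real.exp (-(n:ℝ))) atTop (𝓝 p) := by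
      have := (hexp0.const_mul (1 - p)).const_add p
      simpa using this
    exact ((Real.continuousAt_log h0.ne').tendsto).comp h2
  · -- interior
    set c := Real.log (u * (1 - p) / (p * (1 - u))) with hc
    apply Tendsto.congr' _ (tendsto_const_nhds :
      Tendsto (fun _ : ℕ => relEnt p u) atTop (𝓝 (relEnt p u)))
    rw [Filter.EventuallyEq, eventually_atTop]
    refine ⟨⌈|c|⌉₊, fun n hn => ?_⟩
    have hcn : |c| ≤ (n : ℝ) := le_trans (Nat.le_ceil _) (Nat.cast_le.2 hn)
    have hT : Tn n p u = c := by
      rw [Tn, if_neg (not_le.2 h0), if_neg (not_le.2 h1), if_neg (not_le.2 hu0'),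
        if_neg (not_le.2 hu1'), ← hc]
      rw [min_eq_right (le_trans (le_abs_self c) hcn),
        max_eq_right (le_trans (neg_le_neg hcn) (neg_abs_le c))]
    rw [hT, hc, phi_tstar h0 h1 hu0' hu1', relEnt_interior h0 h1]











lemma abs_Tn_le (n : ℕ) (p u : ℝ) : |Tn n p u| ≤ (n : ℝ) := by
  have hn : (0:ℝ) ≤ n := Nat.cast_nonneg n
  rw [Tn]
  split_ifs <;> rw [abs_le] <;> constructor <;> try linarith
  · exact le_max_left _ _
  · exact max_le (by linarith) (min_le_left _ _)

lemma measurable_Tn (n : ℕ) : Measurable (fun z : ℝ × ℝ => Tn n z.1 z.2) := by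
  unfold Tn
  refine Measurable.ite (measurableSet_le measurable_fst measurable_const) ?_ ?_
  · exact Measurable.ite (measurableSet_le measurable_snd measurable_const)
      measurable_const measurable_const
  refine Measurable.ite (measurableSet_le measurable_const measurable_fst) ?_ ?_
  · exact Measurable.ite (measurableSet_le measurable_const measurable_snd)
      measurable_const measurable_const
  refine Measurable.ite (measurableSet_le measurable_snd measurable_const) measurable_const ?_
  refine Measurable.ite (measurableSet_le measurable_const measurable_snd) measurable_const ?_
  exact measurable_const.max (measurable_const.min (Real.measurable_log.comp
    ((measurable_snd.mul (measurable_const.sub measurable_fst)).div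
      (measurable_fst.mul (measurable_const.sub measurable_snd)))))

lemma abs_phi_le {p u t : ℝ} (hp0 : 0 ≤ p) (hp1 : p ≤ 1) (hu0 : 0 ≤ u) (hu1 : u ≤ 1) :
    |phi p u t| ≤ 2 * |t| := by
  have hs := s_pos hp0 hp1 t
  have e1 : Real.exp t ≤ Real.exp |t| := Real.exp_le_exp.2 (le_abs_self t)
  have e2 : (1:ℝ) ≤ Real.exp |t| := Real.one_le_exp (abs_nonneg t)
  have e3 : Real.exp (-|t|) ≤ Real.exp t := Real.exp_le_exp.2 (neg_abs_le t)
  have e4 : Real.exp (-|t|) ≤ 1 := Real.exp_le_one_iff.2 (neg_nonpos.2 (abs_nonneg t))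
  have hup : p * Real.exp t + 1 - p ≤ Real.exp |t| := by nlinarith
  have hlo : Real.exp (-|t|) ≤ p * Real.exp t + 1 - p := by nlinarith
  have l1 : Real.log (p * Real.exp t + 1 - p) ≤ |t| :=
    (Real.log_le_iff_le_exp hs).2 hup
  have l2 : -|t| ≤ Real.log (p * Real.exp t + 1 - p) := by
    have := Real.log_le_log (Real.exp_pos _) hlo
    rwa [Real.log_exp] at this
  have hm : |t * u| ≤ |t| := by
    rw [abs_mul]
    calc |t| * |u| ≤ |t| * 1 := by
          apply mul_le_mul_of_nonneg_left _ (abs_nonneg t)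
          rw [abs_le]; constructor <;> linarith
      _ = |t| := mul_one _
  rw [phi, abs_le]
  rw [abs_le] at hm
  constructor <;> linarith

lemma unitSq_vol : volume unitSq < ⊤ := by
  rw [unitSq, Measure.volume_eq_prod, Measure.prod_prod, Real.volume_Icc]
  norm_num

/-- variational representation of `I_{W₀}`:
`I_{W₀}(f) = (1/2) sup_{a ∈ S} K_{W₀}(f,a)` as an identity in `[0,∞]`. -/
theorem stmt2 (W₀ f : ℝ → ℝ → ℝ) (hW : IsGraphon W₀) (hf : IsGraphon f) :
    Ient W₀ f =
      (1 / 2) * ⨆ a : {a : ℝ → ℝ → ℝ // SymL2 a}, ENNReal.ofReal (Kfun W₀ f a.1) := by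
  obtain ⟨hWm, hWb, hWs⟩ := hW
  obtain ⟨hfm, hfb, hfs⟩ := hf
  have hWq : Measurable (fun q : ℝ × ℝ => W₀ q.1 q.2) := hWm
  have hfq : Measurable (fun q : ℝ × ℝ => f q.1 q.2) := hfm
  rw [Ient]
  congr 1
  apply le_antisymm
  · -- lintegral ≤ sup, via Fatou
    set aN : ℕ → ℝ → ℝ → ℝ := fun n x y => Tn n (W₀ x y) (f x y) with haN
    have hTq : ∀ n, Measurable (fun q : ℝ × ℝ => Tn n (W₀ q.1 q.2) (f q.1 q.2)) :=
      fun n => (measurable_Tn n).comp (hWq.prodMk hfq)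
    have hphim : ∀ n, Measurable (fun q : ℝ × ℝ =>
        phi (W₀ q.1 q.2) (f q.1 q.2) (Tn n (W₀ q.1 q.2) (f q.1 q.2))) := by
      intro n
      simp only [phi]
      exact ((hTq n).mul hfq).sub (Real.measurable_log.comp
        (((hWq.mul (Real.measurable_exp.comp (hTq n))).add measurable_const).sub hWq))
    have hSym : ∀ n, SymL2 (aN n) := by
      intro n
      refine ⟨(measurable_Tn n).comp (hWq.prodMk hfq), ae_of_all _ fun q => by
        simp only [haN]; rw [hWs q.1 q.2, hfs q.1 q.2], ?_⟩
      refine Integrable.mono' (g := fun _ => (n:ℝ)^2)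
        (integrableOn_const unitSq_vol.ne) ?_ (ae_of_all _ fun q => ?_)
      · exact (((hTq n).pow measurable_const)).aestronglyMeasurable
      · simp only [haN]
        have h := abs_Tn_le n (W₀ q.1 q.2) (f q.1 q.2)
        rw [Real.norm_eq_abs, abs_pow]
        exact pow_le_pow_left₀ (abs_nonneg _) h 2
    have hpt : ∀ q : ℝ × ℝ, Tendsto
        (fun n => ENNReal.ofReal (phi (W₀ q.1 q.2) (f q.1 q.2) (Tn n (W₀ q.1 q.2) (f q.1 q.2))))
        atTop (𝓝 (relEnt (W₀ q.1 q.2) (f q.1 q.2))) :=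
      fun q => tendsto_phi_Tn (hWb _ _) (hfb _ _)
    have hb : ∀ n : ℕ, (∫⁻ q in unitSq, ENNReal.ofReal
          (phi (W₀ q.1 q.2) (f q.1 q.2) (Tn n (W₀ q.1 q.2) (f q.1 q.2))))
        ≤ ⨆ a : {a : ℝ → ℝ → ℝ // SymL2 a}, ENNReal.ofReal (Kfun W₀ f a.1) := by
      intro n
      have hint : IntegrableOn (fun q : ℝ × ℝ =>
          phi (W₀ q.1 q.2) (f q.1 q.2) (Tn n (W₀ q.1 q.2) (f q.1 q.2))) unitSq := by
        refine Integrable.mono' (g := fun _ => 2 * (n:ℝ))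
          (integrableOn_const unitSq_vol.ne) (hphim n).aestronglyMeasurable
          (ae_of_all _ fun q => ?_)
        calc |phi (W₀ q.1 q.2) (f q.1 q.2) (Tn n (W₀ q.1 q.2) (f q.1 q.2))|
            ≤ 2 * |Tn n (W₀ q.1 q.2) (f q.1 q.2)| :=
              abs_phi_le (hWb q.1 q.2).1 (hWb q.1 q.2).2 (hfb q.1 q.2).1 (hfb q.1 q.2).2
          _ ≤ 2 * (n:ℝ) := by linarith [abs_Tn_le n (W₀ q.1 q.2) (f q.1 q.2)]
      have heq : (∫⁻ q in unitSq, ENNReal.ofReal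
            (phi (W₀ q.1 q.2) (f q.1 q.2) (Tn n (W₀ q.1 q.2) (f q.1 q.2))))
          = ENNReal.ofReal (Kfun W₀ f (aN n)) := by
        rw [← ofReal_integral_eq_lintegral_ofReal hint
          (ae_of_all _ fun q => phi_Tn_nonneg (hWb _ _) (hfb _ _) n)]
        rfl
      rw [heq]
      exact le_iSup_of_le ⟨aN n, hSym n⟩ le_rfl
    calc (∫⁻ q in unitSq, relEnt (W₀ q.1 q.2) (f q.1 q.2))
        = ∫⁻ q in unitSq, Filter.liminf (fun n : ℕ => ENNReal.ofReal
            (phi (W₀ q.1 q.2) (f q.1 q.2) (Tn n (W₀ q.1 q.2) (f q.1 q.2)))) atTop :=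
          lintegral_congr fun q => ((hpt q).liminf_eq).symm
      _ ≤ Filter.liminf (fun n : ℕ => ∫⁻ q in unitSq, ENNReal.ofReal
            (phi (W₀ q.1 q.2) (f q.1 q.2) (Tn n (W₀ q.1 q.2) (f q.1 q.2)))) atTop :=
          lintegral_liminf_le fun n => ((hphim n).ennreal_ofReal)
      _ ≤ Filter.liminf (fun _ : ℕ => ⨆ a : {a : ℝ → ℝ → ℝ // SymL2 a},
            ENNReal.ofReal (Kfun W₀ f a.1)) atTop :=
          Filter.liminf_le_liminf (Filter.Eventually.of_forall hb)
      _ = _ := Filter.liminf_const _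
  · -- sup ≤ lintegral
    apply iSup_le
    rintro ⟨a, ham, hasym, haint⟩
    set g : ℝ × ℝ → ℝ := fun q => a q.1 q.2 * f q.1 q.2 -
      Real.log (W₀ q.1 q.2 * Real.exp (a q.1 q.2) + 1 - W₀ q.1 q.2) with hgdef
    have hK : Kfun W₀ f a = ∫ q in unitSq, g q := rfl
    by_cases hi : IntegrableOn g unitSq
    · have hpos : IntegrableOn (fun q => max (g q) 0) unitSq := hi.pos_part
      calc ENNReal.ofReal (Kfun W₀ f a)
          ≤ ENNReal.ofReal (∫ q in unitSq, max (g q) 0) := by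
            rw [hK]
            exact ENNReal.ofReal_le_ofReal
              (integral_mono hi hpos (fun q => le_max_left _ _))
        _ = ∫⁻ q in unitSq, ENNReal.ofReal (max (g q) 0) :=
            ofReal_integral_eq_lintegral_ofReal hpos (ae_of_all _ fun q => le_max_right _ _)
        _ = ∫⁻ q in unitSq, ENNReal.ofReal (g q) := lintegral_congr fun q => by
            rcases le_total (g q) 0 with h | h
            · rw [max_eq_right h, ENNReal.ofReal_of_nonpos h, ENNReal.ofReal_zero]
            · rw [max_eq_left h]
        _ ≤ ∫⁻ q in unitSq, relEnt (W₀ q.1 q.2) (f q.1 q.2) := lintegral_mono fun q => by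
            have : g q = phi (W₀ q.1 q.2) (f q.1 q.2) (a q.1 q.2) := rfl
            rw [this]
            exact ofReal_phi_le_relEnt (hWb _ _) (hfb _ _) _
    · have : Kfun W₀ f a = 0 := by rw [hK]; exact integral_undef hi
      rw [this]
      simp

end GraphonLDP
end
end
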